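/- Min-cost per-step worst-case bound: in a finite discounted MDP, let δ > 0, let C : S → A → ℝ be a cost signal, and let π, π' be policies with (π s a = 0 → π' s a = 0) such that D̄_KL(π'‖π) ≤ δ and 𝔸_C(π,π') ≤ 0 (these conditions hold when π' solves the trust-region subproblem minimizing 𝔸_C(π,·) subject to D̄_KL(·‖π) ≤ δ over a class containing π). Then J_C(π') − J_C(π) ≤ √(2δ) · γ · ε_C(π,π') / (1−γ)². -/

import Mathlib

open Real BigOperators

/-- Induced transition matrix of policy `pol`: `P_pol(s,s') = ∑ a, pol s a * P s a s'`. -/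
noncomputable def transMat {S A : Type*} [Fintype A] (P : S → A → S → ℝ)
    (pol : S → A → ℝ) : Matrix S S ℝ :=
  fun s s' => ∑ a, pol s a * P s a s'

/-- Discounted state visitation distribution
`d_pol(s) = (1-γ) ∑ₜ γ^t ∑_{s0} ρ0 s0 * (P_pol^t)(s0,s)`. -/
noncomputable def dVisit {S A : Type*} [Fintype S] [DecidableEq S] [Fintype A]
    (P : S → A → S → ℝ) (γ : ℝ) (ρ0 : S → ℝ) (pol : S → A → ℝ) (s : S) : ℝ :=
  (1 - γ) * ∑' t : ℕ, γ ^ t * ∑ s0, ρ0 s0 * (transMat P pol ^ t) s0 s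

/-- Value function of signal `F` under policy `pol`. -/
noncomputable def Vfun {S A : Type*} [Fintype S] [DecidableEq S] [Fintype A]
    (P : S → A → S → ℝ) (γ : ℝ) (F : S → A → ℝ) (pol : S → A → ℝ) (s : S) : ℝ :=
  ∑' t : ℕ, γ ^ t * ∑ s', (transMat P pol ^ t) s s' * ∑ a, pol s' a * F s' a

/-- Return `J_F(pol) = ∑ s, ρ0 s * V_F^pol(s)`. -/
noncomputable def Jret {S A : Type*} [Fintype S] [DecidableEq S] [Fintype A]
    (P : S → A → S → ℝ) (γ : ℝ) (ρ0 : S → ℝ) (F : S → A → ℝ) (pol : S → A → ℝ) : ℝ :=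
  ∑ s, ρ0 s * Vfun P γ F pol s

/-- Action-value function `Q_F^pol(s,a) = F s a + γ ∑_{s'} P s a s' * V_F^pol(s')`. -/
noncomputable def Qfun {S A : Type*} [Fintype S] [DecidableEq S] [Fintype A]
    (P : S → A → S → ℝ) (γ : ℝ) (F : S → A → ℝ) (pol : S → A → ℝ) (s : S) (a : A) : ℝ :=
  F s a + γ * ∑ s', P s a s' * Vfun P γ F pol s'

/-- Advantage function `A_F^pol(s,a) = Q_F^pol(s,a) - V_F^pol(s)`. -/
noncomputable def Adv {S A : Type*} [Fintype S] [DecidableEq S] [Fintype A]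
    (P : S → A → S → ℝ) (γ : ℝ) (F : S → A → ℝ) (pol : S → A → ℝ) (s : S) (a : A) : ℝ :=
  Qfun P γ F pol s a - Vfun P γ F pol s

/-- Expected surrogate advantage
`𝔸_F(pol,pol') = ∑ s, d_pol(s) ∑ a, pol' s a * A_F^pol(s,a)`. -/
noncomputable def surrAdv {S A : Type*} [Fintype S] [DecidableEq S] [Fintype A]
    (P : S → A → S → ℝ) (γ : ℝ) (ρ0 : S → ℝ) (F : S → A → ℝ)
    (pol pol' : S → A → ℝ) : ℝ :=
  ∑ s, dVisit P γ ρ0 pol s * ∑ a, pol' s a * Adv P γ F pol s a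

/-- `ε_F(pol,pol') = max_s |∑ a, pol' s a * A_F^pol(s,a)|`. -/
noncomputable def epsAdv {S A : Type*} [Fintype S] [DecidableEq S] [Fintype A] [Nonempty S]
    (P : S → A → S → ℝ) (γ : ℝ) (F : S → A → ℝ) (pol pol' : S → A → ℝ) : ℝ :=
  Finset.univ.sup' Finset.univ_nonempty fun s => |∑ a, pol' s a * Adv P γ F pol s a|

/-- Per-state KL divergence `KL(pol'‖pol)(s) = ∑ a, pol' s a * log (pol' s a / pol s a)`
(with the convention `0 * log 0 = 0`, automatic since `Real.log 0 = 0`). -/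
noncomputable def klState {S A : Type*} [Fintype A] (pol' pol : S → A → ℝ) (s : S) : ℝ :=
  ∑ a, pol' s a * Real.log (pol' s a / pol s a)

/-- Averaged KL divergence `D̄_KL(pol'‖pol) = ∑ s, d_pol(s) * KL(pol'‖pol)(s)`. -/
noncomputable def avgKL {S A : Type*} [Fintype S] [DecidableEq S] [Fintype A]
    (P : S → A → S → ℝ) (γ : ℝ) (ρ0 : S → ℝ) (pol' pol : S → A → ℝ) : ℝ :=
  ∑ s, dVisit P γ ρ0 pol s * klState pol' pol s

/-! The performance difference identity gives `(1 - γ) (J_C(π') - J_C(π)) = ⟨d_π', ḡ⟩`, where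
`ḡ s = ∑ a, π' s a * A_C^π(s, a)`. Since `⟨d_π, ḡ⟩ = 𝔸_C(π, π') ≤ 0` and `|ḡ| ≤ ε`, the gain is at
most `‖d_π' - d_π‖₁ ε`. Subtracting the fixed-point equations `d = (1 - γ) ρ₀ + γ d P_π` of the two
visitation distributions gives `(1 - γ) ‖d_π' - d_π‖₁ ≤ γ 𝔼_{d_π} ‖π'(s) - π(s)‖₁`, and Pinsker's
inequality together with Jensen bounds this average by `√(2 D̄_KL(π'‖π)) ≤ √(2δ)`. -/

open Finset Matrix Set InformationTheory

lemma monotoneOn_add_one_mul_log_sub :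
    MonotoneOn (fun t : ℝ => (t + 1) * log t - 2 * (t - 1)) (Ioi 0) := by
  have hderiv : ∀ t : ℝ, 0 < t →
      HasDerivAt (fun t : ℝ => (t + 1) * log t - 2 * (t - 1)) (klFun t / t) t := by
    intro t ht
    have := (((hasDerivAt_id t).add_const 1).mul (hasDerivAt_log ht.ne')).sub
      (((hasDerivAt_id t).sub_const 1).const_mul 2)
    refine this.congr_deriv ?_
    simp only [klFun_apply, id]
    field_simp
    ring
  refine monotoneOn_of_hasDerivWithinAt_nonneg (f' := fun t => klFun t / t) (convex_Ioi 0)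
    (fun t ht => (hderiv t ht).continuousAt.continuousWithinAt) (fun t ht => ?_) (fun t ht => ?_)
  · rw [interior_Ioi] at ht ⊢
    exact (hderiv t ht).hasDerivWithinAt
  · rw [interior_Ioi] at ht
    exact div_nonneg (klFun_nonneg ht.le) ht.le

/-- The difference of the two sides decreases on `(0, 1]` and increases on `[1, ∞)`: its
derivative is `4 ((t + 1) log t - 2 (t - 1))`, which has the sign of `t - 1`. -/
lemma three_mul_sq_sub_one_le_klFun {t : ℝ} (ht : 0 ≤ t) :
    3 * (t - 1) ^ 2 ≤ (2 * t + 4) * klFun t := by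
  set h : ℝ → ℝ := fun t => (2 * t + 4) * klFun t - 3 * (t - 1) ^ 2
  have hderiv : ∀ t, 0 < t → HasDerivAt h (4 * ((t + 1) * log t - 2 * (t - 1))) t := by
    intro t ht
    have := (((hasDerivAt_id t).const_mul 2).add_const 4).mul (hasDerivAt_klFun ht.ne')
      |>.sub ((((hasDerivAt_id t).sub_const 1).pow 2).const_mul 3)
    refine this.congr_deriv ?_
    simp only [klFun_apply, id]
    push_cast
    ring
  have hφ := monotoneOn_add_one_mul_log_sub
  suffices h 1 ≤ h t by simpa [h, klFun_one] using this
  rcases le_total 1 t with h1 | h1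
  · refine monotoneOn_of_hasDerivWithinAt_nonneg (convex_Ici 1)
      (f' := fun t => 4 * ((t + 1) * log t - 2 * (t - 1)))
      (fun x hx => (hderiv x (one_pos.trans_le hx)).continuousAt.continuousWithinAt)
      (fun x hx => ?_) (fun x hx => ?_) self_mem_Ici h1 h1
    · rw [interior_Ici] at hx ⊢
      exact (hderiv x (one_pos.trans hx)).hasDerivWithinAt
    · rw [interior_Ici] at hx
      have := hφ (mem_Ioi.2 one_pos) (mem_Ioi.2 (one_pos.trans hx)) hx.le
      simp only [log_one] at this
      linarith
  · rcases ht.eq_or_lt with rfl | ht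
    · norm_num [h, klFun_zero, klFun_one]
    refine antitoneOn_of_hasDerivWithinAt_nonpos (convex_Ioc 0 1)
      (f' := fun t => 4 * ((t + 1) * log t - 2 * (t - 1)))
      (fun x hx => (hderiv x hx.1).continuousAt.continuousWithinAt)
      (fun x hx => ?_) (fun x hx => ?_) ⟨ht, h1⟩ (right_mem_Ioc.2 one_pos) h1
    · rw [interior_Ioc] at hx ⊢
      exact (hderiv x hx.1).hasDerivWithinAt
    · rw [interior_Ioc] at hx
      have := hφ (mem_Ioi.2 hx.1) (mem_Ioi.2 one_pos) hx.2.le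
      simp only [log_one] at this
      linarith

lemma mul_log_div_add_sub_eq_mul_klFun {p q : ℝ} (h : q = 0 → p = 0) :
    p * log (p / q) + q - p = q * klFun (p / q) := by
  rcases eq_or_ne q 0 with rfl | hq
  · simp [h rfl]
  · rw [klFun_apply]
    field_simp

lemma three_mul_sq_sub_le_mul_klFun {p q : ℝ} (hp : 0 ≤ p) (hq : 0 ≤ q) (h : q = 0 → p = 0) :
    3 * (p - q) ^ 2 ≤ (2 * p + 4 * q) * (q * klFun (p / q)) := by
  rcases hq.eq_or_lt with rfl | hq
  · simp [h rfl]
  calc 3 * (p - q) ^ 2 = q ^ 2 * (3 * (p / q - 1) ^ 2) := by field_simp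
    _ ≤ q ^ 2 * ((2 * (p / q) + 4) * klFun (p / q)) :=
      mul_le_mul_of_nonneg_left (three_mul_sq_sub_one_le_klFun (by positivity)) (sq_nonneg q)
    _ = (2 * p + 4 * q) * (q * klFun (p / q)) := by field_simp

/-- Pinsker's inequality, by Cauchy–Schwarz against the weights `2 p + 4 q` (total mass `6`). -/
theorem sq_sum_abs_sub_le_two_mul_sum_mul_log_div {ι : Type*} [Fintype ι] {p q : ι → ℝ}
    (hp : ∀ i, 0 ≤ p i) (hq : ∀ i, 0 ≤ q i) (hp1 : ∑ i, p i = 1) (hq1 : ∑ i, q i = 1)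
    (hpq : ∀ i, q i = 0 → p i = 0) :
    (∑ i, |p i - q i|) ^ 2 ≤ 2 * ∑ i, p i * log (p i / q i) := by
  have hCS := sum_sq_le_sum_mul_sum_of_sq_le_mul univ (r := fun i => |p i - q i|)
    (f := fun i => 2 * p i + 4 * q i) (g := fun i => q i * klFun (p i / q i) / 3)
    (fun i _ => by linarith [hp i, hq i])
    (fun i _ => div_nonneg (mul_nonneg (hq i) (klFun_nonneg (div_nonneg (hp i) (hq i))))
      zero_le_three)
    (fun i _ => by
      rw [sq_abs, mul_div_assoc']
      exact (le_div_iff₀' zero_lt_three).2 (three_mul_sq_sub_le_mul_klFun (hp i) (hq i) (hpq i)))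
  have hf : ∑ i, (2 * p i + 4 * q i) = 6 := by
    rw [sum_add_distrib, ← mul_sum, ← mul_sum, hp1, hq1]; norm_num
  have hg : ∑ i, q i * klFun (p i / q i) / 3 = (∑ i, p i * log (p i / q i)) / 3 := by
    simp_rw [← sum_div, ← mul_log_div_add_sub_eq_mul_klFun (hpq _), sum_sub_distrib,
      sum_add_distrib, hp1, hq1, add_sub_cancel_right]
  rw [hf, hg] at hCS
  linarith

lemma sum_mul_le_sqrt_sum_mul_sq {ι : Type*} [Fintype ι] {w : ι → ℝ} (hw : ∀ i, 0 ≤ w i)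
    (hw1 : ∑ i, w i = 1) (f : ι → ℝ) : ∑ i, w i * f i ≤ √(∑ i, w i * f i ^ 2) := by
  refine Real.le_sqrt_of_sq_le ?_
  simpa [hw1] using sum_sq_le_sum_mul_sum_of_sq_le_mul univ (fun i _ => hw i)
    (fun i _ => mul_nonneg (hw i) (sq_nonneg (f i))) (fun i _ => (by ring : (w i * f i) ^ 2 = _).le)

lemma sum_mul_sum_abs_sub_le_sqrt {ι κ : Type*} [Fintype ι] [Fintype κ] {w : ι → ℝ}
    (hw : ∀ i, 0 ≤ w i) (hw1 : ∑ i, w i = 1) {p q : ι → κ → ℝ} (hp : ∀ i k, 0 ≤ p i k)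
    (hq : ∀ i k, 0 ≤ q i k) (hp1 : ∀ i, ∑ k, p i k = 1) (hq1 : ∀ i, ∑ k, q i k = 1)
    (hpq : ∀ i k, q i k = 0 → p i k = 0) :
    ∑ i, w i * ∑ k, |p i k - q i k| ≤ √(2 * ∑ i, w i * ∑ k, p i k * log (p i k / q i k)) := by
  refine (sum_mul_le_sqrt_sum_mul_sq hw hw1 _).trans (Real.sqrt_le_sqrt ?_)
  rw [mul_sum]
  refine sum_le_sum fun i _ => ?_
  rw [mul_left_comm]
  exact mul_le_mul_of_nonneg_left (sq_sum_abs_sub_le_two_mul_sum_mul_log_div (hp i) (hq i)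
    (hp1 i) (hq1 i) (hpq i)) (hw i)

lemma dotProduct_le_add_sum_abs_sub_mul {ι : Type*} [Fintype ι] {x y g : ι → ℝ} {ε : ℝ}
    (hg : ∀ i, |g i| ≤ ε) : x ⬝ᵥ g ≤ y ⬝ᵥ g + (∑ i, |x i - y i|) * ε := by
  calc x ⬝ᵥ g = y ⬝ᵥ g + (x - y) ⬝ᵥ g := by rw [sub_dotProduct]; ring
    _ ≤ y ⬝ᵥ g + (∑ i, |x i - y i|) * ε := by
        rw [sum_mul]
        gcongr
        refine sum_le_sum fun i _ => (le_abs_self _).trans ?_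
        rw [abs_mul]
        exact mul_le_mul_of_nonneg_left (hg i) (abs_nonneg _)

lemma summable_geometric_smul_of_abs_le {ι : Type*} {γ B : ℝ} (hγ : |γ| < 1) {v : ℕ → ι → ℝ}
    (hv : ∀ t i, |v t i| ≤ B) : Summable fun t => γ ^ t • v t :=
  Pi.summable.2 fun i => .of_norm_bounded
    ((summable_geometric_of_lt_one (abs_nonneg γ) hγ).mul_left B) fun t => by
      rw [Pi.smul_apply, smul_eq_mul, norm_mul, norm_pow, Real.norm_eq_abs, Real.norm_eq_abs,
        mul_comm]
      exact mul_le_mul_of_nonneg_right (hv t i) (by positivity)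

namespace Matrix

lemma sum_abs_vecMul_le {m n : Type*} [Fintype m] [Fintype n] (x : m → ℝ) (N : Matrix m n ℝ) :
    ∑ j, |(x ᵥ* N) j| ≤ ∑ i, |x i| * ∑ j, |N i j| := by
  calc ∑ j, |(x ᵥ* N) j| ≤ ∑ j, ∑ i, |x i| * |N i j| :=
        sum_le_sum fun j _ => (abs_sum_le_sum_abs _ _).trans_eq (by simp only [abs_mul])
    _ = ∑ i, |x i| * ∑ j, |N i j| := by rw [sum_comm]; simp only [mul_sum]

variable {n R : Type*} [Fintype n] [DecidableEq n]

lemma abs_mulVec_le_sum_abs {M : Matrix n n ℝ} (hM : M ∈ rowStochastic ℝ n) (r : n → ℝ) (i : n) :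
    |(M *ᵥ r) i| ≤ ∑ j, |r j| :=
  (abs_sum_le_sum_abs _ _).trans <| sum_le_sum fun j _ => by
    rw [abs_mul, abs_of_nonneg (nonneg_of_mem_rowStochastic hM)]
    exact mul_le_of_le_one_left (abs_nonneg _) (le_one_of_mem_rowStochastic hM)

lemma abs_vecMul_le_sum_abs {M : Matrix n n ℝ} (hM : M ∈ rowStochastic ℝ n) (x : n → ℝ) (j : n) :
    |(x ᵥ* M) j| ≤ ∑ i, |x i| :=
  (abs_sum_le_sum_abs _ _).trans <| sum_le_sum fun i _ => by
    rw [abs_mul, abs_of_nonneg (nonneg_of_mem_rowStochastic hM)]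
    exact mul_le_of_le_one_right (abs_nonneg _) (le_one_of_mem_rowStochastic hM)

lemma summable_geometric_smul_pow_mulVec {M : Matrix n n ℝ} (hM : M ∈ rowStochastic ℝ n)
    {γ : ℝ} (hγ : |γ| < 1) (r : n → ℝ) : Summable fun t : ℕ => γ ^ t • (M ^ t *ᵥ r) :=
  summable_geometric_smul_of_abs_le hγ fun t => abs_mulVec_le_sum_abs (pow_mem hM t) r

lemma summable_geometric_smul_vecMul_pow {M : Matrix n n ℝ} (hM : M ∈ rowStochastic ℝ n)
    {γ : ℝ} (hγ : |γ| < 1) (x : n → ℝ) : Summable fun t : ℕ => γ ^ t • (x ᵥ* M ^ t) :=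
  summable_geometric_smul_of_abs_le hγ fun t => abs_vecMul_le_sum_abs (pow_mem hM t) x

variable [CommRing R] [TopologicalSpace R] [IsTopologicalRing R] [T2Space R]
  {M : Matrix n n R} {γ : R}

lemma eq_add_smul_mulVec_of_hasSum {r v : n → R}
    (h : HasSum (fun t : ℕ => γ ^ t • (M ^ t *ᵥ r)) v) : v = r + γ • M *ᵥ v := by
  have htail : HasSum (fun t : ℕ => γ ^ (t + 1) • (M ^ (t + 1) *ᵥ r)) (v - r) := by
    simpa using (hasSum_nat_add_iff' 1).2 h
  have hstep : HasSum (fun t : ℕ => γ ^ (t + 1) • (M ^ (t + 1) *ᵥ r)) (γ • M *ᵥ v) := by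
    convert (h.map M.mulVecLin (continuous_const.matrix_mulVec continuous_id)).const_smul γ
      using 2 with t
    · simp [pow_succ', mulVec_mulVec, smul_smul]
    · rfl
  rw [← htail.unique hstep, add_sub_cancel]

lemma eq_add_smul_vecMul_of_hasSum {x u : n → R}
    (h : HasSum (fun t : ℕ => γ ^ t • (x ᵥ* M ^ t)) u) : u = x + γ • u ᵥ* M := by
  have htail : HasSum (fun t : ℕ => γ ^ (t + 1) • (x ᵥ* M ^ (t + 1))) (u - x) := by
    simpa using (hasSum_nat_add_iff' 1).2 h
  have hstep : HasSum (fun t : ℕ => γ ^ (t + 1) • (x ᵥ* M ^ (t + 1))) (γ • u ᵥ* M) := by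
    convert (h.map M.vecMulLinear (continuous_id.matrix_vecMul continuous_const)).const_smul γ
      using 2 with t
    · simp [pow_succ, vecMul_vecMul, smul_smul, mul_comm]
    · rfl
  rw [← htail.unique hstep, add_sub_cancel]

end Matrix

section MDP

variable {S A : Type*} [Fintype S] [Fintype A] {P : S → A → S → ℝ} {γ : ℝ}
  {pol pol' : S → A → ℝ}

lemma sum_abs_transMat_sub_le (hP0 : ∀ s a s', 0 ≤ P s a s') (hP1 : ∀ s a, ∑ s', P s a s' = 1)
    (s : S) :
    ∑ s', |transMat P pol' s s' - transMat P pol s s'| ≤ ∑ a, |pol' s a - pol s a| := by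
  have h := sum_abs_vecMul_le (pol' s - pol s) (P s)
  simp only [fun a s' => abs_of_nonneg (hP0 s a s'), hP1, mul_one, Pi.sub_apply] at h
  convert h using 3 with s'
  simp only [transMat, vecMul, dotProduct, Pi.sub_apply, sub_mul, sum_sub_distrib]

variable [DecidableEq S]

lemma transMat_mem_rowStochastic (hP0 : ∀ s a s', 0 ≤ P s a s') (hP1 : ∀ s a, ∑ s', P s a s' = 1)
    (hpol0 : ∀ s a, 0 ≤ pol s a) (hpol1 : ∀ s, ∑ a, pol s a = 1) :
    transMat P pol ∈ rowStochastic ℝ S := by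
  refine mem_rowStochastic_iff_sum.2
    ⟨fun s s' => sum_nonneg fun a _ => mul_nonneg (hpol0 s a) (hP0 s a s'), fun s => ?_⟩
  simp only [transMat]
  rw [sum_comm]
  simp [← mul_sum, hP1, hpol1]

lemma Vfun_eq_add_smul_mulVec (hM : transMat P pol ∈ rowStochastic ℝ S) (hγ : |γ| < 1)
    (F : S → A → ℝ) :
    Vfun P γ F pol = (fun s => ∑ a, pol s a * F s a) + γ • transMat P pol *ᵥ Vfun P γ F pol := by
  have hs := summable_geometric_smul_pow_mulVec hM hγ fun s => ∑ a, pol s a * F s a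
  have hV : Vfun P γ F pol
      = ∑' t : ℕ, γ ^ t • (transMat P pol ^ t *ᵥ fun s => ∑ a, pol s a * F s a) :=
    funext fun s => (tsum_apply hs).symm
  rw [hV]
  exact eq_add_smul_mulVec_of_hasSum hs.hasSum

lemma dVisit_eq_add_smul_vecMul (hM : transMat P pol ∈ rowStochastic ℝ S) (hγ : |γ| < 1)
    (ρ0 : S → ℝ) :
    dVisit P γ ρ0 pol = (1 - γ) • ρ0 + γ • dVisit P γ ρ0 pol ᵥ* transMat P pol := by
  have hs := summable_geometric_smul_vecMul_pow hM hγ ρ0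
  have hd : dVisit P γ ρ0 pol = (1 - γ) • ∑' t : ℕ, γ ^ t • (ρ0 ᵥ* transMat P pol ^ t) :=
    funext fun s => by rw [Pi.smul_apply, tsum_apply hs]; rfl
  rw [hd]
  conv_lhs => rw [eq_add_smul_vecMul_of_hasSum hs.hasSum]
  rw [smul_add, smul_vecMul, smul_comm]

lemma dVisit_nonneg (hM : transMat P pol ∈ rowStochastic ℝ S) (hγ0 : 0 ≤ γ) (hγ1 : γ < 1)
    {ρ0 : S → ℝ} (hρ0 : ∀ s, 0 ≤ ρ0 s) (s : S) : 0 ≤ dVisit P γ ρ0 pol s :=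
  mul_nonneg (sub_nonneg.2 hγ1.le) <| tsum_nonneg fun t =>
    mul_nonneg (pow_nonneg hγ0 t) (nonneg_vecMul_of_mem_rowStochastic (pow_mem hM t) hρ0 s)

lemma sum_dVisit (hM : transMat P pol ∈ rowStochastic ℝ S) (hγ : |γ| < 1)
    {ρ0 : S → ℝ} (hρ1 : ∑ s, ρ0 s = 1) : ∑ s, dVisit P γ ρ0 pol s = 1 := by
  have h := congrArg (· ⬝ᵥ (1 : S → ℝ)) (dVisit_eq_add_smul_vecMul hM hγ ρ0)
  rw [add_dotProduct, smul_dotProduct, smul_dotProduct, ← dotProduct_mulVec,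
    one_vecMul_of_mem_rowStochastic hM, dotProduct_one, dotProduct_one, hρ1, smul_eq_mul,
    smul_eq_mul] at h
  have hγ1 : 1 - γ ≠ 0 := sub_ne_zero.2 fun h1 => by simp [← h1] at hγ
  exact mul_left_cancel₀ hγ1 (by linarith)

lemma sum_mul_Adv (F : S → A → ℝ) (hpol'1 : ∀ s, ∑ a, pol' s a = 1) :
    (fun s => ∑ a, pol' s a * Adv P γ F pol s a)
      = (fun s => ∑ a, pol' s a * F s a) + γ • transMat P pol' *ᵥ Vfun P γ F pol
        - Vfun P γ F pol := by
  ext s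
  have hV : ∑ a, pol' s a * Vfun P γ F pol s = Vfun P γ F pol s := by
    rw [← sum_mul, hpol'1, one_mul]
  simp only [Adv, Qfun, transMat, Pi.add_apply, Pi.sub_apply, Pi.smul_apply, smul_eq_mul,
    mulVec, dotProduct, mul_sub, mul_add, sum_sub_distrib, sum_add_distrib, hV]
  simp only [mul_sum, sum_mul]
  rw [sum_comm]
  simp only [mul_comm, mul_left_comm]

theorem one_sub_mul_Jret_sub_Jret (hM' : transMat P pol' ∈ rowStochastic ℝ S) (hγ : |γ| < 1)
    (ρ0 : S → ℝ) (F : S → A → ℝ) (hpol'1 : ∀ s, ∑ a, pol' s a = 1) :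
    (1 - γ) * (Jret P γ ρ0 F pol' - Jret P γ ρ0 F pol)
      = dVisit P γ ρ0 pol' ⬝ᵥ fun s => ∑ a, pol' s a * Adv P γ F pol s a := by
  rw [sum_mul_Adv F hpol'1]
  have hd' := dVisit_eq_add_smul_vecMul hM' hγ ρ0
  have hV' := Vfun_eq_add_smul_mulVec hM' hγ F
  set M' := transMat P pol'
  set d' := dVisit P γ ρ0 pol'
  set V := Vfun P γ F pol
  set V' := Vfun P γ F pol'
  calc (1 - γ) * (Jret P γ ρ0 F pol' - Jret P γ ρ0 F pol) = ((1 - γ) • ρ0) ⬝ᵥ (V' - V) := by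
        rw [smul_dotProduct, dotProduct_sub, smul_eq_mul]; rfl
    _ = d' ⬝ᵥ (V' - V - γ • M' *ᵥ (V' - V)) := by
        rw [eq_sub_of_add_eq hd'.symm, sub_dotProduct, smul_dotProduct,
          dotProduct_sub d' (V' - V), dotProduct_smul, dotProduct_mulVec]
    _ = _ := by
        rw [mulVec_sub, smul_sub]
        nth_rw 1 [hV']
        abel_nf

theorem one_sub_mul_sum_abs_dVisit_sub_le (hP0 : ∀ s a s', 0 ≤ P s a s')
    (hP1 : ∀ s a, ∑ s', P s a s' = 1) (hM : transMat P pol ∈ rowStochastic ℝ S)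
    (hM' : transMat P pol' ∈ rowStochastic ℝ S) (hγ0 : 0 ≤ γ) (hγ1 : γ < 1) {ρ0 : S → ℝ}
    (hρ0 : ∀ s, 0 ≤ ρ0 s) :
    (1 - γ) * ∑ s, |dVisit P γ ρ0 pol' s - dVisit P γ ρ0 pol s|
      ≤ γ * ∑ s, dVisit P γ ρ0 pol s * ∑ a, |pol' s a - pol s a| := by
  have hγ : |γ| < 1 := abs_lt.2 ⟨by linarith, hγ1⟩
  have hd0 := dVisit_nonneg hM hγ0 hγ1 hρ0
  have hd := dVisit_eq_add_smul_vecMul hM hγ ρ0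
  have hd' := dVisit_eq_add_smul_vecMul hM' hγ ρ0
  set d := dVisit P γ ρ0 pol
  set d' := dVisit P γ ρ0 pol'
  set M := transMat P pol
  set M' := transMat P pol'
  have hdiff : d' - d = γ • ((d' - d) ᵥ* M' + d ᵥ* (M' - M)) := by
    conv_lhs => rw [hd', hd]
    simp only [sub_vecMul, vecMul_sub, smul_add, smul_sub]
    abel
  have hstay : ∑ s, |((d' - d) ᵥ* M') s| ≤ ∑ s, |d' s - d s| :=
    (sum_abs_vecMul_le _ _).trans_eq <| sum_congr rfl fun s _ => by
      rw [sum_congr rfl fun j _ => abs_of_nonneg (nonneg_of_mem_rowStochastic hM'),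
        sum_row_of_mem_rowStochastic hM', mul_one, Pi.sub_apply]
  have hmove : ∑ s, |(d ᵥ* (M' - M)) s| ≤ ∑ s, d s * ∑ a, |pol' s a - pol s a| :=
    (sum_abs_vecMul_le _ _).trans <| sum_le_sum fun s _ => by
      rw [abs_of_nonneg (hd0 s)]
      exact mul_le_mul_of_nonneg_left (sum_abs_transMat_sub_le hP0 hP1 s) (hd0 s)
  have hrec : ∑ s, |d' s - d s|
      ≤ γ * (∑ s, |d' s - d s| + ∑ s, d s * ∑ a, |pol' s a - pol s a|) :=
    calc ∑ s, |d' s - d s| = γ * ∑ s, |((d' - d) ᵥ* M' + d ᵥ* (M' - M)) s| := by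
          change ∑ s, |(d' - d) s| = _
          conv_lhs => rw [hdiff]
          simp_rw [Pi.smul_apply, smul_eq_mul, abs_mul, abs_of_nonneg hγ0, ← mul_sum]
      _ ≤ γ * (∑ s, |((d' - d) ᵥ* M') s| + ∑ s, |(d ᵥ* (M' - M)) s|) := by
          rw [← sum_add_distrib]
          gcongr with s
          exact abs_add_le _ _
      _ ≤ _ := by gcongr
  linarith

end MDP

theorem min_cost_step_worst_case_general {S A : Type*} [Fintype S] [DecidableEq S] [Fintype A] [Nonempty S]
    (P : S → A → S → ℝ) (hP0 : ∀ s a s', 0 ≤ P s a s') (hP1 : ∀ s a, ∑ s', P s a s' = 1)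
    (γ : ℝ) (hγ0 : 0 < γ) (hγ1 : γ < 1)
    (ρ0 : S → ℝ) (hρ0 : ∀ s, 0 ≤ ρ0 s) (hρ1 : ∑ s, ρ0 s = 1)
    (δ : ℝ) (C : S → A → ℝ)
    (pol : S → A → ℝ) (hpol0 : ∀ s a, 0 ≤ pol s a) (hpol1 : ∀ s, ∑ a, pol s a = 1) (pol' : S → A → ℝ) (hpol'0 : ∀ s a, 0 ≤ pol' s a) (hpol'1 : ∀ s, ∑ a, pol' s a = 1)
    (habs : ∀ s a, pol s a = 0 → pol' s a = 0)
    (hKL : avgKL P γ ρ0 pol' pol ≤ δ)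
    (hA : surrAdv P γ ρ0 C pol pol' ≤ 0) :
    Jret P γ ρ0 C pol' - Jret P γ ρ0 C pol ≤
      Real.sqrt (2 * δ) * γ * epsAdv P γ C pol pol' / (1 - γ) ^ 2 := by
  have hγ : |γ| < 1 := abs_lt.2 ⟨by linarith, hγ1⟩
  have hM := transMat_mem_rowStochastic hP0 hP1 hpol0 hpol1
  have hM' := transMat_mem_rowStochastic hP0 hP1 hpol'0 hpol'1
  set ε := epsAdv P γ C pol pol'
  set N := ∑ s, |dVisit P γ ρ0 pol' s - dVisit P γ ρ0 pol s|
  have hε : ∀ s, |∑ a, pol' s a * Adv P γ C pol s a| ≤ ε := fun s =>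
    le_sup' (fun s => |∑ a, pol' s a * Adv P γ C pol s a|) (mem_univ s)
  have hε0 : 0 ≤ ε := (abs_nonneg _).trans (hε (Classical.arbitrary S))
  have hgain : (1 - γ) * (Jret P γ ρ0 C pol' - Jret P γ ρ0 C pol) ≤ N * ε := by
    have hA' : dVisit P γ ρ0 pol ⬝ᵥ (fun s => ∑ a, pol' s a * Adv P γ C pol s a) ≤ 0 := hA
    rw [one_sub_mul_Jret_sub_Jret hM' hγ ρ0 C hpol'1]
    exact (dotProduct_le_add_sum_abs_sub_mul hε).trans (by linarith)
  have hpinsker : ∑ s, dVisit P γ ρ0 pol s * ∑ a, |pol' s a - pol s a| ≤ √(2 * δ) :=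
    (sum_mul_sum_abs_sub_le_sqrt (dVisit_nonneg hM hγ0.le hγ1 hρ0) (sum_dVisit hM hγ hρ1)
      hpol'0 hpol0 hpol'1 hpol1 habs).trans
      (Real.sqrt_le_sqrt (by unfold avgKL klState at hKL; linarith))
  have hshift : (1 - γ) * N ≤ γ * √(2 * δ) :=
    (one_sub_mul_sum_abs_dVisit_sub_le hP0 hP1 hM hM' hγ0.le hγ1 hρ0).trans (by gcongr)
  rw [le_div_iff₀ (pow_pos (sub_pos.2 hγ1) 2)]
  calc (Jret P γ ρ0 C pol' - Jret P γ ρ0 C pol) * (1 - γ) ^ 2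
      = (1 - γ) * ((1 - γ) * (Jret P γ ρ0 C pol' - Jret P γ ρ0 C pol)) := by ring
    _ ≤ (1 - γ) * N * ε := by rw [mul_assoc]; exact mul_le_mul_of_nonneg_left hgain (by linarith)
    _ ≤ γ * √(2 * δ) * ε := mul_le_mul_of_nonneg_right hshift hε0
    _ = √(2 * δ) * γ * ε := by ring

/-- min-cost per-step worst-case bound. -/
theorem min_cost_step_worst_case {S A : Type*} [Fintype S] [DecidableEq S] [Fintype A] [Nonempty S] [Nonempty A]
    (P : S → A → S → ℝ) (hP0 : ∀ s a s', 0 ≤ P s a s') (hP1 : ∀ s a, ∑ s', P s a s' = 1)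
    (γ : ℝ) (hγ0 : 0 < γ) (hγ1 : γ < 1)
    (ρ0 : S → ℝ) (hρ0 : ∀ s, 0 ≤ ρ0 s) (hρ1 : ∑ s, ρ0 s = 1)
    (δ : ℝ) (hδ : 0 < δ) (C : S → A → ℝ)
    (pol : S → A → ℝ) (hpol0 : ∀ s a, 0 ≤ pol s a) (hpol1 : ∀ s, ∑ a, pol s a = 1) (pol' : S → A → ℝ) (hpol'0 : ∀ s a, 0 ≤ pol' s a) (hpol'1 : ∀ s, ∑ a, pol' s a = 1)
    (habs : ∀ s a, pol s a = 0 → pol' s a = 0)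
    (hKL : avgKL P γ ρ0 pol' pol ≤ δ)
    (hA : surrAdv P γ ρ0 C pol pol' ≤ 0) :
    Jret P γ ρ0 C pol' - Jret P γ ρ0 C pol ≤
      Real.sqrt (2 * δ) * γ * epsAdv P γ C pol pol' / (1 - γ) ^ 2 :=
  min_cost_step_worst_case_general P hP0 hP1 γ hγ0 hγ1 ρ0 hρ0 hρ1 δ C pol hpol0 hpol1 pol' hpol'0
    hpol'1 habs hKL hA
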